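/- arXiv:1010.4350 — 5 statements merged into one kernel-verified Lean document; each statement's English description precedes it below -/
import Mathlib

section
/- Let u be a 2×2 complex unitary matrix and let C_u = |0⟩⟨0| ⊗ I₂ + |1⟩⟨1| ⊗ u be the associated 4×4 controlled unitary (acting on ℂ² ⊗ ℂ², control on the first factor). Then there exist 2×2 unitary matrices A and B satisfying C_u · (X ⊗ I₂) = (A ⊗ B) · C_u if and only if Tr(u) = 0 or u is a complex scalar multiple of the 2×2 identity matrix. -/
open Matrix Kronecker

noncomputable section

/-- Pauli X matrix. -/
def PX : Matrix (Fin 2) (Fin 2) ℂ := !![0, 1; 1, 0]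

/-- Matrix unit |0⟩⟨0|. -/
def e00 : Matrix (Fin 2) (Fin 2) ℂ := !![1, 0; 0, 0]

/-- Matrix unit |1⟩⟨1|. -/
def e11 : Matrix (Fin 2) (Fin 2) ℂ := !![0, 0; 0, 1]

/-- Controlled unitary C_u = |0⟩⟨0| ⊗ I₂ + |1⟩⟨1| ⊗ u. -/
def CU (u : Matrix (Fin 2) (Fin 2) ℂ) : Matrix (Fin 2 × Fin 2) (Fin 2 × Fin 2) ℂ :=
  e00 ⊗ₖ (1 : Matrix (Fin 2) (Fin 2) ℂ) + e11 ⊗ₖ u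

/-! Read as 2×2 block matrices, `C_u (X ⊗ I)` is `[[0, I], [u, 0]]` while `(A ⊗ B) C_u` is
`[[a₀₀ B, a₀₁ B u], [a₁₀ B, a₁₁ B u]]`. A solution therefore gives `B u = a₀₁⁻¹ I` and `u = a₁₀ B`,
so `u² = (a₁₀ / a₀₁) I`. Conversely, if `u² = μ I` then `|μ| = 1` and `A = [[0, 1], [μ, 0]]`,
`B = u⋆` is a solution. By Cayley–Hamilton, `u² = tr(u) u - det(u) I`, which is scalar exactly
when `tr u = 0` or `u` is scalar. -/

theorem Matrix.comp_symm_kronecker {R I J K L : Type*} [Mul R] (A : Matrix I J R)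
    (B : Matrix K L R) : (comp I J K L R).symm (A ⊗ₖ B) = of fun i j => A i j • B := rfl

theorem Matrix.adjugate_fin_two_eq {R : Type*} [CommRing R] (A : Matrix (Fin 2) (Fin 2) R) :
    adjugate A = A.trace • 1 - A := by
  ext i j; fin_cases i <;> fin_cases j <;> simp [adjugate_fin_two, trace_fin_two]

theorem Matrix.mul_self_fin_two {R : Type*} [CommRing R] (A : Matrix (Fin 2) (Fin 2) R) :
    A * A = A.trace • A - A.det • 1 := by
  have := adjugate_mul A
  rw [adjugate_fin_two_eq, sub_mul, smul_one_mul] at this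
  rw [← this, sub_sub_cancel]

theorem Matrix.exists_mul_self_eq_smul_one_iff_fin_two {K : Type*} [Field K]
    (A : Matrix (Fin 2) (Fin 2) K) :
    (∃ μ : K, A * A = μ • 1) ↔ A.trace = 0 ∨ ∃ c : K, A = c • 1 := by
  constructor
  · rintro ⟨μ, hμ⟩
    refine or_iff_not_imp_left.2 fun htr => ⟨A.trace⁻¹ * (μ + A.det), ?_⟩
    have htrA : A.trace • A = (μ + A.det) • 1 := by
      rw [add_smul, ← hμ, mul_self_fin_two, sub_add_cancel]
    rw [mul_smul, ← htrA, inv_smul_smul₀ htr]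
  · rintro (htr | ⟨c, rfl⟩)
    · exact ⟨-A.det, by rw [mul_self_fin_two, htr, zero_smul, zero_sub, neg_smul]⟩
    · exact ⟨c * c, by rw [smul_mul_smul_comm, one_mul]⟩

theorem Matrix.star_mul_self_eq_one_of_smul_one_mem_unitaryGroup {n α : Type*} [Fintype n]
    [DecidableEq n] [Nonempty n] [CommRing α] [StarRing α] {c : α}
    (hc : c • (1 : Matrix n n α) ∈ unitaryGroup n α) : star c * c = 1 := by
  have h := congrFun (congrFun ((mem_unitaryGroup_iff').1 hc) (Classical.arbitrary n))
    (Classical.arbitrary n)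
  rw [mul_comm]
  simpa [star_smul, smul_smul] using h

theorem comp_symm_CU (u : Matrix (Fin 2) (Fin 2) ℂ) :
    (comp (Fin 2) (Fin 2) (Fin 2) (Fin 2) ℂ).symm (CU u) = !![1, 0; 0, u] := by
  ext i j : 2
  fin_cases i <;> fin_cases j <;> simp [CU, e00, e11]

theorem CU_mul_PX_kronecker_one_eq_iff (u A B : Matrix (Fin 2) (Fin 2) ℂ) :
    CU u * (PX ⊗ₖ 1) = (A ⊗ₖ B) * CU u ↔
      A 0 0 • B = 0 ∧ A 0 1 • (B * u) = 1 ∧ A 1 0 • B = u ∧ A 1 1 • (B * u) = 0 := by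
  rw [← (compRingEquiv (Fin 2) (Fin 2) ℂ).symm.injective.eq_iff, map_mul, map_mul]
  simp only [compRingEquiv_symm_apply, comp_symm_CU, comp_symm_kronecker]
  rw [eta_fin_two (of fun i j => PX i j • 1), eta_fin_two (of fun i j => A i j • B)]
  simp [PX, eq_comm, and_assoc, -smul_eq_zero]

theorem mul_self_eq_smul_one_of_CU_mul_PX_kronecker_one_eq {u A B : Matrix (Fin 2) (Fin 2) ℂ}
    (h : CU u * (PX ⊗ₖ 1) = (A ⊗ₖ B) * CU u) : u * u = (A 1 0 / A 0 1) • 1 := by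
  obtain ⟨-, h01, h10, -⟩ := (CU_mul_PX_kronecker_one_eq_iff u A B).1 h
  have hA01 : A 0 1 ≠ 0 := by
    rintro h0
    simp [h0] at h01
  calc u * u = A 1 0 • (B * u) := by rw [← h10, smul_mul_assoc]
    _ = (A 1 0 / A 0 1) • (A 0 1 • (B * u)) := by rw [smul_smul, div_mul_cancel₀ _ hA01]
    _ = (A 1 0 / A 0 1) • 1 := by rw [h01]

theorem exists_unitary_CU_mul_PX_kronecker_one_eq {u : Matrix (Fin 2) (Fin 2) ℂ}
    (hu : u ∈ unitaryGroup (Fin 2) ℂ) {μ : ℂ} (hμ : u * u = μ • 1) :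
    ∃ A B : Matrix (Fin 2) (Fin 2) ℂ, A ∈ unitaryGroup (Fin 2) ℂ ∧ B ∈ unitaryGroup (Fin 2) ℂ ∧
      CU u * (PX ⊗ₖ 1) = (A ⊗ₖ B) * CU u := by
  have hμ_unit : star μ * μ = 1 :=
    star_mul_self_eq_one_of_smul_one_mem_unitaryGroup (hμ ▸ mul_mem hu hu)
  refine ⟨!![0, 1; μ, 0], star u, ?_, Unitary.star_mem hu, ?_⟩
  · rw [mem_unitaryGroup_iff']
    ext i j
    fin_cases i <;> fin_cases j <;> simp [star_eq_conjTranspose, mul_apply]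
    exact hμ_unit
  · refine (CU_mul_PX_kronecker_one_eq_iff u _ _).2 ⟨zero_smul _ _, ?_, ?_, zero_smul _ _⟩
    · simp [(mem_unitaryGroup_iff').1 hu]
    · show μ • star u = u
      calc μ • star u = u * u * star u := by rw [hμ, smul_one_mul]
        _ = u := by rw [mul_assoc, (mem_unitaryGroup_iff).1 hu, mul_one]

theorem stmt_0 (u : Matrix (Fin 2) (Fin 2) ℂ) (hu : u ∈ Matrix.unitaryGroup (Fin 2) ℂ) :
    (∃ A B : Matrix (Fin 2) (Fin 2) ℂ,
        A ∈ Matrix.unitaryGroup (Fin 2) ℂ ∧ B ∈ Matrix.unitaryGroup (Fin 2) ℂ ∧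
        CU u * (PX ⊗ₖ (1 : Matrix (Fin 2) (Fin 2) ℂ)) = (A ⊗ₖ B) * CU u) ↔
      (u.trace = 0 ∨ ∃ c : ℂ, u = c • (1 : Matrix (Fin 2) (Fin 2) ℂ)) := by
  rw [← exists_mul_self_eq_smul_one_iff_fin_two]
  constructor
  · rintro ⟨A, B, -, -, h⟩
    exact ⟨_, mul_self_eq_smul_one_of_CU_mul_PX_kronecker_one_eq h⟩
  · rintro ⟨μ, hμ⟩
    exact exists_unitary_CU_mul_PX_kronecker_one_eq hu hμ

end
end

section
/- Let u be a 2×2 complex unitary matrix with Tr(u) = 0, and let C_u = |0⟩⟨0| ⊗ I₂ + |1⟩⟨1| ⊗ u. Then there exist a real number θ and a 2×2 unitary matrix w such that C_u = (I₂ ⊗ w) · ((u_θ ⊗ I₂) · C_Z) · (I₂ ⊗ w†), where u_θ = |0⟩⟨0| + e^{iθ}|1⟩⟨1| is the single-qubit phase matrix and C_Z = |0⟩⟨0| ⊗ I₂ + |1⟩⟨1| ⊗ Z is the controlled-Z matrix. -/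
/-!
Since `tr u = 0`, Cayley–Hamilton gives `u * u = -det u • 1`, and `-det u` has modulus one, so it
has a square root `e^{iθ}`. Then `v = e^{-iθ} u` is a unitary involution, hence Hermitian, with
trace `0` and determinant `-1`: its eigenvalues are `1` and `-1`, and the spectral theorem gives
`v = w Z w†`. Finally, `I ⊗ w` and `u_θ ⊗ I` act on a controlled gate through its target:
`(I ⊗ w) C_a (I ⊗ w†) = C_{w a w†}` and `(u_θ ⊗ I) C_a = C_{e^{iθ} a}`.
-/

open Matrix Kronecker

noncomputable section

/-- Pauli Z matrix. -/
def PZ : Matrix (Fin 2) (Fin 2) ℂ := !![1, 0; 0, -1]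

/-- Single-qubit phase matrix u_θ = diag(1, e^{iθ}). -/
def phaseU (θ : ℝ) : Matrix (Fin 2) (Fin 2) ℂ :=
  !![1, 0; 0, Complex.exp (θ * Complex.I)]

namespace Matrix

theorem mul_self_eq_neg_det_smul_one_of_trace_eq_zero {R : Type*} [CommRing R]
    {A : Matrix (Fin 2) (Fin 2) R} (h : A.trace = 0) : A * A = -A.det • 1 := by
  have h11 : A 1 1 = -A 0 0 := by rw [trace_fin_two] at h; linear_combination h
  ext i j
  fin_cases i <;> fin_cases j <;> simp [mul_apply, det_fin_two, h11] <;> ring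

theorem isHermitian_of_mem_unitaryGroup_of_mul_self_eq_one {n α : Type*} [Fintype n]
    [DecidableEq n] [CommRing α] [StarRing α] {A : Matrix n n α} (hA : A ∈ unitaryGroup n α)
    (h : A * A = 1) : A.IsHermitian :=
  calc Aᴴ = Aᴴ * (A * A) := by rw [h, mul_one]
    _ = A := by
      rw [← mul_assoc, ← star_eq_conjTranspose, (mem_unitaryGroup_iff').mp hA, one_mul]

end Matrix

theorem Complex.exists_exp_mul_I_sq_eq {z : ℂ} (hz : ‖z‖ = 1) :
    ∃ θ : ℝ, Complex.exp (θ * Complex.I) ^ 2 = z := by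
  refine ⟨z.arg / 2, ?_⟩
  rw [← Complex.exp_nat_mul]
  conv_rhs => rw [← Complex.norm_mul_exp_arg_mul_I z, hz]
  push_cast
  ring_nf

theorem exists_unitary_eq_conj_PZ_of_isHermitian {v : Matrix (Fin 2) (Fin 2) ℂ}
    (hv : v.IsHermitian) (htr : v.trace = 0) (hdet : v.det = -1) :
    ∃ w ∈ unitaryGroup (Fin 2) ℂ, v = w * PZ * wᴴ := by
  set a := hv.eigenvalues 0
  have hsum : hv.eigenvalues 1 = -a := by
    rw [hv.trace_eq_sum_eigenvalues, Fin.sum_univ_two] at htr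
    exact_mod_cast eq_neg_of_add_eq_zero_right htr
  have ha : a * a = 1 := by
    rw [hv.det_eq_prod_eigenvalues, Fin.prod_univ_two, hsum] at hdet
    -- `hdet` spells the index `0` with a different `OfNat` instance than `a` does
    change (a : ℂ) * ((-a : ℝ) : ℂ) = -1 at hdet
    have : a * -a = -1 := by exact_mod_cast hdet
    linear_combination -this
  set U := (hv.eigenvectorUnitary : Matrix (Fin 2) (Fin 2) ℂ)
  have hspec : v = U * !![(a : ℂ), 0; 0, -a] * Uᴴ := by
    conv_lhs => rw [hv.spectral_theorem, Unitary.conjStarAlgAut_apply]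
    congr 2
    ext i j
    fin_cases i <;> fin_cases j <;> simp [a, hsum]
  have hU : U ∈ unitaryGroup (Fin 2) ℂ := hv.eigenvectorUnitary.2
  rcases mul_self_eq_one_iff.mp ha with h | h
  · refine ⟨U, hU, ?_⟩
    rw [hspec, PZ, h]
    norm_num
  · set X : Matrix (Fin 2) (Fin 2) ℂ := !![0, 1; 1, 0]
    have hX : X ∈ unitaryGroup (Fin 2) ℂ := by
      rw [mem_unitaryGroup_iff]
      ext i j
      fin_cases i <;> fin_cases j <;> simp [X, mul_apply]
    have hXZX : X * PZ * Xᴴ = !![(a : ℂ), 0; 0, -a] := by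
      ext i j
      fin_cases i <;> fin_cases j <;> simp [X, PZ, mul_apply, h]
    refine ⟨U * X, Submonoid.mul_mem _ hU hX, ?_⟩
    rw [hspec, ← hXZX, conjTranspose_mul]
    simp only [Matrix.mul_assoc]

theorem exists_exp_smul_unitary_conj_PZ {u : Matrix (Fin 2) (Fin 2) ℂ}
    (hu : u ∈ unitaryGroup (Fin 2) ℂ) (htr : u.trace = 0) :
    ∃ (θ : ℝ) (w : Matrix (Fin 2) (Fin 2) ℂ), w ∈ unitaryGroup (Fin 2) ℂ ∧
      u = Complex.exp (θ * Complex.I) • (w * PZ * wᴴ) := by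
  have hdet_norm : ‖-u.det‖ = 1 := by
    rw [norm_neg]; exact CStarRing.norm_of_mem_unitary (det_of_mem_unitary hu)
  obtain ⟨θ, hθ⟩ := Complex.exists_exp_mul_I_sq_eq hdet_norm
  set c := Complex.exp (θ * Complex.I)
  have hc : star c * c = 1 := by
    rw [Complex.star_def, ← Complex.exp_conj, ← Complex.exp_add]
    simp
  set v := star c • u
  have hv_tr : v.trace = 0 := by rw [trace_smul, htr, smul_zero]
  have hv_det : v.det = -1 := by
    rw [det_smul, Fintype.card_fin, ← neg_neg u.det, ← hθ]
    linear_combination -(star c * c + 1) * hc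
  have hv_unitary : v ∈ unitaryGroup (Fin 2) ℂ := by
    rw [mem_unitaryGroup_iff', star_smul, smul_mul_smul, (mem_unitaryGroup_iff').mp hu,
      star_star, mul_comm, hc, one_smul]
  have hv_sq : v * v = 1 := by
    rw [mul_self_eq_neg_det_smul_one_of_trace_eq_zero hv_tr, hv_det, neg_neg, one_smul]
  obtain ⟨w, hw, hvw⟩ := exists_unitary_eq_conj_PZ_of_isHermitian
    (isHermitian_of_mem_unitaryGroup_of_mul_self_eq_one hv_unitary hv_sq) hv_tr hv_det
  refine ⟨θ, w, hw, ?_⟩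
  rw [← hvw, smul_smul, mul_comm, hc, one_smul]

theorem phaseU_kronecker_one_mul_CU (θ : ℝ) (a : Matrix (Fin 2) (Fin 2) ℂ) :
    (phaseU θ ⊗ₖ (1 : Matrix (Fin 2) (Fin 2) ℂ)) * CU a =
      CU (Complex.exp (θ * Complex.I) • a) := by
  have h0 : phaseU θ * e00 = e00 := by
    ext i j; fin_cases i <;> fin_cases j <;> simp [phaseU, e00, mul_apply]
  have h1 : phaseU θ * e11 = Complex.exp (θ * Complex.I) • e11 := by
    ext i j; fin_cases i <;> fin_cases j <;> simp [phaseU, e11, mul_apply]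
  rw [CU, CU, mul_add, ← mul_kronecker_mul, ← mul_kronecker_mul, h0, h1, one_mul, one_mul,
    smul_kronecker, kronecker_smul]

theorem one_kronecker_mul_CU_mul_one_kronecker_conjTranspose {w : Matrix (Fin 2) (Fin 2) ℂ}
    (hw : w ∈ unitaryGroup (Fin 2) ℂ) (a : Matrix (Fin 2) (Fin 2) ℂ) :
    ((1 : Matrix (Fin 2) (Fin 2) ℂ) ⊗ₖ w) * CU a * ((1 : Matrix (Fin 2) (Fin 2) ℂ) ⊗ₖ wᴴ) =
      CU (w * a * wᴴ) := by
  rw [CU, CU, mul_add, add_mul, ← mul_kronecker_mul, ← mul_kronecker_mul, ← mul_kronecker_mul,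
    ← mul_kronecker_mul, one_mul, one_mul, mul_one, mul_one, mul_one,
    ← star_eq_conjTranspose, mem_unitaryGroup_iff.mp hw]

theorem stmt_3 (u : Matrix (Fin 2) (Fin 2) ℂ) (hu : u ∈ Matrix.unitaryGroup (Fin 2) ℂ)
    (htr : u.trace = 0) :
    ∃ (θ : ℝ) (w : Matrix (Fin 2) (Fin 2) ℂ), w ∈ Matrix.unitaryGroup (Fin 2) ℂ ∧
      CU u = ((1 : Matrix (Fin 2) (Fin 2) ℂ) ⊗ₖ w) *
        ((phaseU θ ⊗ₖ (1 : Matrix (Fin 2) (Fin 2) ℂ)) * CU PZ) *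
        ((1 : Matrix (Fin 2) (Fin 2) ℂ) ⊗ₖ wᴴ) := by
  obtain ⟨θ, w, hw, rfl⟩ := exists_exp_smul_unitary_conj_PZ hu htr
  refine ⟨θ, w, hw, ?_⟩
  rw [phaseU_kronecker_one_mul_CU, one_kronecker_mul_CU_mul_one_kronecker_conjTranspose hw,
    Matrix.mul_smul, Matrix.smul_mul]

end
end

section
/- Every controlled unitary is locally unitary equivalent to a controlled phase: for any 2×2 complex unitary matrix u there exist a real number θ and 2×2 unitary matrices v₁, v₂, v₁', v₂' such that C_u = (v₁' ⊗ v₂') · C_{u_θ} · (v₁ ⊗ v₂), where u_θ = |0⟩⟨0| + e^{iθ}|1⟩⟨1| and C_{u_θ} = |0⟩⟨0| ⊗ I₂ + |1⟩⟨1| ⊗ u_θ. -/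
open Matrix Kronecker

noncomputable section

/-!
Diagonalise `u` by the unitary `w` whose first column is a unit eigenvector: `w⋆ u w` is a
triangular unitary, hence diagonal, so `u = w diag(z₀, z₁) w⋆` with `|z₀| = |z₁| = 1`, and
`diag(z₀, z₁) = z₀ u_θ` for `e^{iθ} = z₁ / z₀`. Both the conjugation by `w` and the scalar `z₀`
leave the target as local factors: `C_{w M w⋆} = (1 ⊗ w) C_M (1 ⊗ w⋆)` and
`C_{z M} = (diag(1, z) ⊗ 1) C_M`.
-/

section
variable {n : Type*} [Fintype n] [DecidableEq n]

theorem Matrix.diagonal_mem_unitaryGroup_iff {𝕜 : Type*} [RCLike 𝕜] {d : n → 𝕜} :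
    diagonal d ∈ unitaryGroup n 𝕜 ↔ ∀ i, ‖d i‖ = 1 := by
  rw [mem_unitaryGroup_iff, star_eq_conjTranspose, diagonal_conjTranspose, diagonal_mul_diagonal,
    diagonal_eq_one]
  refine funext_iff.trans (forall_congr' fun i => ?_)
  simp only [Pi.star_apply, RCLike.star_def, RCLike.mul_conj, Pi.one_apply]
  norm_cast
  exact pow_eq_one_iff_of_nonneg (norm_nonneg _) two_ne_zero

open scoped ComplexOrder in
theorem Matrix.exists_unit_eigenvector [Nonempty n] (u : Matrix n n ℂ) :
    ∃ (μ : ℂ) (v : n → ℂ), star v ⬝ᵥ v = 1 ∧ u *ᵥ v = μ • v := by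
  obtain ⟨μ, hμ⟩ := Module.End.exists_eigenvalue (toLin' u)
  obtain ⟨v, hv, hv0⟩ := hμ.exists_hasEigenvector
  rw [Module.End.mem_eigenspace_iff, toLin'_apply] at hv
  obtain ⟨r, hr, hrv⟩ := RCLike.pos_iff_exists_ofReal.mp (dotProduct_star_self_pos_iff.mpr hv0)
  change (r : ℂ) = _ at hrv
  refine ⟨μ, (((√r)⁻¹ : ℝ) : ℂ) • v, ?_, by rw [mulVec_smul, hv, smul_comm]⟩
  rw [star_smul, smul_dotProduct, dotProduct_smul, ← hrv, Complex.star_def, Complex.conj_ofReal,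
    smul_eq_mul, smul_eq_mul, ← mul_assoc, ← Complex.ofReal_mul, ← Complex.ofReal_mul, ← mul_inv,
    Real.mul_self_sqrt hr.le, inv_mul_cancel₀ hr.ne', Complex.ofReal_one]

end

section
variable {R : Type*} [CommRing R] [StarRing R]

def unitaryOfColumn (v : Fin 2 → R) : Matrix (Fin 2) (Fin 2) R :=
  !![v 0, -star (v 1); v 1, star (v 0)]

theorem unitaryOfColumn_mem_unitaryGroup {v : Fin 2 → R} (hv : star v ⬝ᵥ v = 1) :
    unitaryOfColumn v ∈ unitaryGroup (Fin 2) R := by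
  simp only [dotProduct, Fin.sum_univ_two, Pi.star_apply] at hv
  rw [mem_unitaryGroup_iff']
  ext i j
  fin_cases i <;> fin_cases j <;> simp [unitaryOfColumn, mul_apply, Fin.sum_univ_two, mul_comm] <;>
    linear_combination hv

end

theorem Matrix.eq_diagonal_of_mem_unitaryGroup_of_lower_eq_zero {T : Matrix (Fin 2) (Fin 2) ℂ}
    (hT : T ∈ unitaryGroup (Fin 2) ℂ) (h : T 1 0 = 0) : T = diagonal ![T 0 0, T 1 1] := by
  have h1 := congr_fun₂ (mem_unitaryGroup_iff'.mp hT) 0 0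
  have h2 := congr_fun₂ (mem_unitaryGroup_iff.mp hT) 0 0
  simp only [mul_apply, star_apply, RCLike.star_def, Fin.sum_univ_two, h, map_zero, mul_zero,
    add_zero, one_apply_eq] at h1 h2
  have : T 0 1 = 0 := by
    rw [← Complex.normSq_eq_zero, ← Complex.ofReal_eq_zero, Complex.normSq_eq_conj_mul_self]
    linear_combination h2 - h1
  ext i j
  fin_cases i <;> fin_cases j <;> simp [h, this]

theorem exists_unitary_conj_diagonal {u : Matrix (Fin 2) (Fin 2) ℂ}
    (hu : u ∈ unitaryGroup (Fin 2) ℂ) :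
    ∃ w ∈ unitaryGroup (Fin 2) ℂ, ∃ d : Fin 2 → ℂ,
      (∀ i, ‖d i‖ = 1) ∧ u = w * diagonal d * star w := by
  obtain ⟨μ, v, hv, hμ⟩ := u.exists_unit_eigenvector
  set w := unitaryOfColumn v
  have hw : w ∈ unitaryGroup (Fin 2) ℂ := unitaryOfColumn_mem_unitaryGroup hv
  set T := star w * u * w with hTdef
  have hT : T ∈ unitaryGroup (Fin 2) ℂ := mul_mem (mul_mem (Unitary.star_mem hw) hu) hw
  have hT₁₀ : T 1 0 = 0 := by
    have h₀ := congrFun hμ 0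
    have h₁ := congrFun hμ 1
    simp only [mulVec, dotProduct, Fin.sum_univ_two, Pi.smul_apply, smul_eq_mul] at h₀ h₁
    simp only [T, w, unitaryOfColumn, mul_apply, star_apply, RCLike.star_def, of_apply, cons_val',
      cons_val_zero, cons_val_one, cons_val_fin_one, Fin.sum_univ_two, map_neg, Complex.conj_conj,
      neg_mul]
    linear_combination -(v 1) * h₀ + v 0 * h₁
  have hdiag := eq_diagonal_of_mem_unitaryGroup_of_lower_eq_zero hT hT₁₀
  refine ⟨w, hw, ![T 0 0, T 1 1], diagonal_mem_unitaryGroup_iff.mp (hdiag ▸ hT), ?_⟩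
  rw [← hdiag, hTdef]
  simp only [← mul_assoc, mem_unitaryGroup_iff.mp hw, one_mul]
  rw [mul_assoc, mem_unitaryGroup_iff.mp hw, mul_one]

theorem CU_conj (w w' M : Matrix (Fin 2) (Fin 2) ℂ) (h : w * w' = 1) :
    CU (w * M * w') = (1 ⊗ₖ w) * CU M * (1 ⊗ₖ w') := by
  simp only [CU, Matrix.mul_add, Matrix.add_mul, ← mul_kronecker_mul, Matrix.mul_one,
    Matrix.one_mul, h]

theorem CU_smul (z : ℂ) (M : Matrix (Fin 2) (Fin 2) ℂ) :
    CU (z • M) = (diagonal ![1, z] ⊗ₖ 1) * CU M := by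
  have h₀ : diagonal ![1, z] * e00 = e00 := by
    ext i j; fin_cases i <;> fin_cases j <;> simp [e00]
  have h₁ : diagonal ![1, z] * e11 = z • e11 := by
    ext i j; fin_cases i <;> fin_cases j <;> simp [e11]
  simp only [CU, Matrix.mul_add, ← mul_kronecker_mul, h₀, h₁, Matrix.one_mul, smul_kronecker,
    kronecker_smul]

theorem exists_diagonal_eq_smul_phaseU {d : Fin 2 → ℂ} (h₀ : ‖d 0‖ = 1) (h₁ : ‖d 1‖ = 1) :
    ∃ θ : ℝ, diagonal d = d 0 • phaseU θ := by
  obtain ⟨θ, hθ⟩ := (Complex.norm_eq_one_iff (d 1 / d 0)).mp (by rw [norm_div, h₀, h₁, div_one])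
  have hd₀ : d 0 ≠ 0 := norm_ne_zero_iff.mp (by rw [h₀]; exact one_ne_zero)
  refine ⟨θ, ?_⟩
  ext i j
  fin_cases i <;> fin_cases j <;> simp [phaseU, hθ, mul_div_cancel₀ _ hd₀]

theorem stmt_4 (u : Matrix (Fin 2) (Fin 2) ℂ) (hu : u ∈ Matrix.unitaryGroup (Fin 2) ℂ) :
    ∃ (θ : ℝ) (v₁ v₂ v₁' v₂' : Matrix (Fin 2) (Fin 2) ℂ),
      v₁ ∈ Matrix.unitaryGroup (Fin 2) ℂ ∧ v₂ ∈ Matrix.unitaryGroup (Fin 2) ℂ ∧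
      v₁' ∈ Matrix.unitaryGroup (Fin 2) ℂ ∧ v₂' ∈ Matrix.unitaryGroup (Fin 2) ℂ ∧
      CU u = (v₁' ⊗ₖ v₂') * CU (phaseU θ) * (v₁ ⊗ₖ v₂) := by
  obtain ⟨w, hw, d, hd, rfl⟩ := exists_unitary_conj_diagonal hu
  obtain ⟨θ, hθ⟩ := exists_diagonal_eq_smul_phaseU (hd 0) (hd 1)
  refine ⟨θ, 1, star w, diagonal ![1, d 0], w, one_mem _, Unitary.star_mem hw, ?_, hw, ?_⟩
  · rw [diagonal_mem_unitaryGroup_iff]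
    intro i
    fin_cases i <;> simp [hd]
  · rw [hθ, CU_conj _ _ _ (mem_unitaryGroup_iff.mp hw), CU_smul, ← Matrix.mul_assoc,
      ← mul_kronecker_mul, Matrix.one_mul, Matrix.mul_one]

end
end

section
/- Let m ≤ n, let Ψ : Fin m × Fin n → ℂ be a vector in ℂ^m ⊗ ℂ^n whose reshaped m×n matrix M (with M(i,k) = Ψ(i,k)) has rank m (i.e., Ψ has full Schmidt rank m on the first factor), and let Π be a positive semidefinite m×m matrix. Define the n×n matrix ρ by ρ(k,l) = Σ_{i,i' ∈ Fin m} Π(i,i')·Ψ(i',k)·conj(Ψ(i,l)) (this is the partial trace over the first factor of (Π ⊗ I_n)|Ψ⟩⟨Ψ|). Then rank ρ = rank Π. In particular, ρ has rank 1 only if Π has rank 1. -/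
open Matrix ComplexOrder

noncomputable section

/-!
Writing `M` for the reshaped `m × n` matrix of `Ψ`, the definition of `ρ` reads
`ρ = Mᵀ * Pᵀ * (Mᵀ)ᴴ`. Since `M` has rank `m`, the `n × m` matrix `Mᵀ` is injective and
`(Mᵀ)ᴴ` is surjective, and composing with an injective map on the left or a surjective map on
the right does not change the rank.
-/

namespace Matrix

variable {K l m o : Type*} [Field K] [Fintype m] [Fintype o]

theorem injective_mulVecLin_of_rank_eq_card_width {A : Matrix l m K}
    (hA : A.rank = Fintype.card m) : Function.Injective A.mulVecLin := by
  rw [← LinearMap.ker_eq_bot, ← Submodule.finrank_eq_zero]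
  have := A.mulVecLin.finrank_range_add_finrank_ker
  rw [Module.finrank_fintype_fun_eq_card] at this
  change A.rank + _ = _ at this
  omega

theorem rank_mul_eq_right_of_rank_eq_card_width {A : Matrix l m K}
    (hA : A.rank = Fintype.card m) (B : Matrix m o K) : (A * B).rank = B.rank := by
  rw [rank, rank, mulVecLin_mul, LinearMap.range_comp,
    ← (Submodule.equivMapOfInjective A.mulVecLin
      (injective_mulVecLin_of_rank_eq_card_width hA) _).finrank_eq]

theorem rank_mul_eq_left_of_rank_eq_card_height [Fintype l] (A : Matrix l m K) {B : Matrix m o K}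
    (hB : B.rank = Fintype.card m) : (A * B).rank = A.rank := by
  rw [← rank_transpose, transpose_mul, rank_mul_eq_right_of_rank_eq_card_width, rank_transpose]
  rwa [rank_transpose]

theorem rank_mul_mul_conjTranspose_of_rank_eq_card_width [Fintype l] [PartialOrder K] [StarRing K]
    [StarOrderedRing K] {A : Matrix l m K} (hA : A.rank = Fintype.card m) (B : Matrix m m K) :
    (A * B * Aᴴ).rank = B.rank := by
  rw [Matrix.mul_assoc, rank_mul_eq_right_of_rank_eq_card_width hA,
    rank_mul_eq_left_of_rank_eq_card_height]
  rwa [rank_conjTranspose]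

end Matrix

theorem stmt_7_general (m n : ℕ) (Ψ : Fin m × Fin n → ℂ)
    (hΨ : (Matrix.of fun (i : Fin m) (k : Fin n) => Ψ (i, k)).rank = m)
    (P : Matrix (Fin m) (Fin m) ℂ)
    (ρ : Matrix (Fin n) (Fin n) ℂ)
    (hρ : ρ = Matrix.of fun (k l : Fin n) =>
      ∑ i : Fin m, ∑ i' : Fin m, P i i' * Ψ (i', k) * star (Ψ (i, l))) :
    ρ.rank = P.rank := by
  set M : Matrix (Fin m) (Fin n) ℂ := Matrix.of fun i k => Ψ (i, k)
  have hρM : ρ = Mᵀ * Pᵀ * (Mᵀ)ᴴ := by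
    ext k l
    simp only [hρ, M, mul_apply, of_apply, transpose_apply, conjTranspose_apply, Finset.sum_mul]
    refine Finset.sum_congr rfl fun i _ => Finset.sum_congr rfl fun i' _ => ?_
    ring
  have hMT : Mᵀ.rank = Fintype.card (Fin m) := by rw [rank_transpose, hΨ, Fintype.card_fin]
  rw [hρM, rank_mul_mul_conjTranspose_of_rank_eq_card_width hMT, rank_transpose]

theorem stmt_7 (m n : ℕ) (hmn : m ≤ n) (Ψ : Fin m × Fin n → ℂ)
    (hΨ : (Matrix.of fun (i : Fin m) (k : Fin n) => Ψ (i, k)).rank = m)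
    (P : Matrix (Fin m) (Fin m) ℂ) (hP : P.PosSemidef)
    (ρ : Matrix (Fin n) (Fin n) ℂ)
    (hρ : ρ = Matrix.of fun (k l : Fin n) =>
      ∑ i : Fin m, ∑ i' : Fin m, P i i' * Ψ (i', k) * star (Ψ (i, l))) :
    ρ.rank = P.rank :=
  stmt_7_general m n Ψ hΨ P ρ hρ

end
end

section
/- (Lemma 1.) Let d ≥ 1 and let H_{A₁} = H_{A₂} = ℂ^{d²}. Let Λ_{A₁} and Λ_{A₂} be CPTP maps on d²×d² complex matrices, given in Kraus form by families {E_a} and {F_b} with Σ_a E_a†E_a = I and Σ_b F_b†F_b = I. Let ρ be a density matrix on H_{A₁} ⊗ H_{A₂} (a positive semidefinite matrix of trace 1 indexed by (Fin d² × Fin d²)), and suppose Σ_{a,b} (E_a ⊗ F_b)·ρ·(E_a ⊗ F_b)† = |Θ⟩⟨Θ|, where Θ = Σ_{k ∈ Fin d²} √λ_k · (α_k ⊗ β_k) with λ_k > 0 for all k, Σ_k λ_k = 1, and {α_k}, {β_k} orthonormal bases of ℂ^{d²}. Then ρ is pure with the same Schmidt coefficients as Θ: there exist a unit vector φ ∈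 H_{A₁} ⊗ H_{A₂} and orthonormal bases {a_k}, {b_k} of ℂ^{d²} such that ρ = |φ⟩⟨φ| and φ = Σ_k √λ_k · (a_k ⊗ b_k). -/
open Matrix Kronecker ComplexOrder

noncomputable section

/-- A family of vectors in ℂ^n indexed by `Fin n` is orthonormal (hence an orthonormal basis). -/
def OrthonormalFamily (n : ℕ) (α : Fin n → Fin n → ℂ) : Prop :=
  ∀ k k' : Fin n, ∑ i : Fin n, star (α k i) * α k' i = if k = k' then 1 else 0

/-!
Write `ρ = G Gᴴ`. Since `Λ ρ = |Θ⟩⟨Θ|` has rank one, every Kraus operator `E a ⊗ F b` maps the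
columns of `G` into `ℂ Θ`, and by the Kraus normalisation some `E a₀ ⊗ F b₀` does not kill a
nonzero column `v`. Reshaping `v` and `Θ` into square matrices `X` and `T`, this reads
`E a * X * (F b)ᵀ = c a b • T`, where `T` is invertible because all Schmidt coefficients are
positive. Cancelling invertible factors shows that all `E a` are multiples of `E a₀` and all `F b`
of `F b₀`; the Kraus normalisation then turns these into multiples of unitaries `U`, `V`, so that
`Λ` is conjugation by `U ⊗ V`. Hence `ρ = |φ⟩⟨φ|` with `φ = (Uᴴ ⊗ Vᴴ) Θ`, whose Schmidt
decomposition uses the orthonormal bases `Uᴴ α k` and `Vᴴ β k`.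
-/

theorem orthonormalFamily_iff_transpose_mem_unitaryGroup {n : ℕ} {α : Fin n → Fin n → ℂ} :
    OrthonormalFamily n α ↔ (of α)ᵀ ∈ unitaryGroup (Fin n) ℂ := by
  rw [mem_unitaryGroup_iff', ← Matrix.ext_iff]
  simp [OrthonormalFamily, mul_apply, one_apply]

theorem OrthonormalFamily.mulVec {n : ℕ} {α : Fin n → Fin n → ℂ} (hα : OrthonormalFamily n α)
    {U : Matrix (Fin n) (Fin n) ℂ} (hU : U ∈ unitaryGroup (Fin n) ℂ) :
    OrthonormalFamily n fun k => U *ᵥ α k := by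
  rw [orthonormalFamily_iff_transpose_mem_unitaryGroup] at hα ⊢
  have : (of fun k => U *ᵥ α k)ᵀ = U * (of α)ᵀ := by
    ext
    simp [Matrix.mulVec, dotProduct, mul_apply]
  rw [this]
  exact mul_mem hU hα

theorem isUnit_sum_mul_of_orthonormalFamily {n : ℕ} {α β : Fin n → Fin n → ℂ}
    (hα : OrthonormalFamily n α) (hβ : OrthonormalFamily n β) {c : Fin n → ℂ}
    (hc : ∀ k, c k ≠ 0) : IsUnit (of fun i j => ∑ k, c k * α k i * β k j) := by
  rw [orthonormalFamily_iff_transpose_mem_unitaryGroup] at hα hβ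
  have : (of fun i j => ∑ k, c k * α k i * β k j) = (of α)ᵀ * diagonal c * of β := by
    ext
    simp [mul_apply, diagonal, mul_comm]
  rw [this]
  refine (Unitary.isUnit_coe (U := ⟨_, hα⟩) |>.mul ?_).mul ?_
  · exact isUnit_diagonal.mpr (Pi.isUnit_iff.mpr fun k => (hc k).isUnit)
  · exact (isUnit_transpose _).mp (Unitary.isUnit_coe (U := ⟨_, hβ⟩))

theorem kronecker_mulVec_apply_of_eq_sum {R l m n p ι : Type*} [CommSemiring R] [Fintype m]
    [Fintype n] [Fintype ι] (A : Matrix l m R) (B : Matrix p n R) {θ : m × n → R} {c : ι → R}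
    {α : ι → m → R} {β : ι → n → R} (hθ : ∀ i j, θ (i, j) = ∑ k, c k * α k i * β k j)
    (i : l) (j : p) :
    ((A ⊗ₖ B) *ᵥ θ) (i, j) = ∑ k, c k * (A *ᵥ α k) i * (B *ᵥ β k) j := by
  simp only [mulVec, dotProduct, Fintype.sum_prod_type, kroneckerMap_apply, hθ, Finset.mul_sum,
    Finset.sum_mul]
  calc _ = ∑ i', ∑ k, ∑ j', A i i' * B j j' * (c k * α k i' * β k j') :=
        Finset.sum_congr rfl fun _ _ => Finset.sum_comm
    _ = ∑ k, ∑ i', ∑ j', A i i' * B j j' * (c k * α k i' * β k j') := Finset.sum_comm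
    _ = _ := Finset.sum_congr rfl fun k _ => by
        rw [Finset.sum_comm]
        exact Finset.sum_congr rfl fun _ _ => Finset.sum_congr rfl fun _ _ => by ring

theorem mul_vecMulVec_star_mul_conjTranspose {R m n : Type*} [CommSemiring R] [StarRing R]
    [Fintype n] (M : Matrix m n R) (x : n → R) :
    M * vecMulVec x (star x) * Mᴴ = vecMulVec (M *ᵥ x) (star (M *ᵥ x)) := by
  rw [mul_vecMulVec, vecMulVec_mul, star_mulVec]

theorem eq_vecMulVec_of_mul_mul_conjTranspose_eq {R m : Type*} [CommRing R] [StarRing R]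
    [Fintype m] [DecidableEq m] {W ρ : Matrix m m R} (hW : W ∈ unitaryGroup m R) {θ : m → R}
    (h : W * ρ * Wᴴ = vecMulVec θ (star θ)) :
    ρ = vecMulVec (Wᴴ *ᵥ θ) (star (Wᴴ *ᵥ θ)) := by
  have hWW : Wᴴ * W = 1 := hW.1
  rw [← mul_vecMulVec_star_mul_conjTranspose, ← h, conjTranspose_conjTranspose,
    ← Matrix.mul_assoc, ← Matrix.mul_assoc, hWW, Matrix.one_mul, Matrix.mul_assoc, hWW,
    Matrix.mul_one]

theorem trace_vecMulVec_star {n : Type*} [Fintype n] (x : n → ℂ) :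
    (vecMulVec x (star x)).trace = ((∑ i, Complex.normSq (x i) : ℝ) : ℂ) := by
  simp [trace_vecMulVec, dotProduct, Complex.mul_conj]

theorem eq_zero_of_sum_mul_conjTranspose_eq_zero {ι m p : Type*} [Fintype ι] [Fintype m]
    [Fintype p] {A : ι → Matrix m p ℂ} (h : ∑ i, A i * (A i)ᴴ = 0) (i : ι) : A i = 0 := by
  have hnonneg : ∀ i, 0 ≤ (A i * (A i)ᴴ).trace := fun i =>
    (posSemidef_self_mul_conjTranspose (A i)).trace_nonneg
  rw [← trace_mul_conjTranspose_self_eq_zero_iff]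
  have := congrArg trace h
  rw [trace_sum, trace_zero, Finset.sum_eq_zero_iff_of_nonneg fun i _ => hnonneg i] at this
  exact this i (Finset.mem_univ i)

theorem eq_vecMulVec_of_sum_mul_conjTranspose_eq {ι m p : Type*} [Fintype ι] [Fintype m]
    [DecidableEq m] [Fintype p] {W : ι → Matrix m p ℂ} {θ : m → ℂ} (hθ : star θ ⬝ᵥ θ = 1)
    (h : ∑ i, W i * (W i)ᴴ = vecMulVec θ (star θ)) (i : ι) :
    W i = vecMulVec θ (star θ ᵥ* W i) := by
  set P := 1 - vecMulVec θ (star θ)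
  have hPθ : P * vecMulVec θ (star θ) = 0 := by
    rw [sub_mul, one_mul, vecMulVec_mul_vecMulVec, hθ, one_smul, sub_self]
  have hPW : P * W i = 0 := by
    refine eq_zero_of_sum_mul_conjTranspose_eq_zero (A := fun i => P * W i) ?_ i
    simp_rw [conjTranspose_mul, ← Matrix.mul_assoc, Matrix.mul_assoc _ (W _), ← Finset.sum_mul,
      ← Finset.mul_sum, h, hPθ, Matrix.zero_mul]
  rw [← vecMulVec_mul, ← sub_eq_zero, ← hPW, Matrix.sub_mul, Matrix.one_mul]

section Kraus

variable {ι κ m n : Type*} [Fintype ι] [Fintype κ] [Fintype m] [Fintype n]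

theorem trace_sum_mul_mul_conjTranspose {R : Type*} [CommSemiring R] [StarRing R]
    [DecidableEq m] {K : ι → Matrix m m R} (hK : ∑ a, (K a)ᴴ * K a = 1) (ρ : Matrix m m R) :
    (∑ a, K a * ρ * (K a)ᴴ).trace = ρ.trace := by
  simp_rw [trace_sum, trace_mul_cycle _ ρ, ← trace_sum, ← Finset.sum_mul, hK, one_mul]

theorem sum_conjTranspose_kronecker_mul_kronecker {R : Type*} [CommSemiring R] [StarRing R]
    [DecidableEq m] [DecidableEq n] {E : ι → Matrix m m R} {F : κ → Matrix n n R}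
    (hE : ∑ a, (E a)ᴴ * E a = 1) (hF : ∑ b, (F b)ᴴ * F b = 1) :
    ∑ ab : ι × κ, (E ab.1 ⊗ₖ F ab.2)ᴴ * (E ab.1 ⊗ₖ F ab.2) = 1 := by
  rw [← one_kronecker_one, ← hE, ← hF]
  ext ⟨i, j⟩ ⟨i', j'⟩
  simp [conjTranspose_kronecker, ← mul_kronecker_mul, Matrix.sum_apply, Fintype.sum_prod_type,
    Finset.sum_mul_sum, kroneckerMap_apply]

theorem exists_mulVec_ne_zero {R : Type*} [CommSemiring R] [StarRing R] [DecidableEq m]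
    {K : ι → Matrix m m R} (hK : ∑ a, (K a)ᴴ * K a = 1) {v : m → R} (hv : v ≠ 0) :
    ∃ a, K a *ᵥ v ≠ 0 := by
  by_contra! h
  apply hv
  rw [← one_mulVec v, ← hK, sum_mulVec]
  simp [← mulVec_mulVec, h]

theorem sum_mul_mul_conjTranspose_of_eq_smul {R : Type*} [CommSemiring R] [StarRing R]
    {K : ι → Matrix m m R} {W : Matrix m m R} {μ : ι → R} (hK : ∀ a, K a = μ a • W)
    (hμ : ∑ a, star (μ a) * μ a = 1) (ρ : Matrix m m R) :
    ∑ a, K a * ρ * (K a)ᴴ = W * ρ * Wᴴ := by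
  simp_rw [hK, conjTranspose_smul, Matrix.smul_mul, Matrix.mul_smul, smul_smul, ← Finset.sum_smul]
  simp_rw [mul_comm (μ _)]
  rw [hμ, one_smul]

theorem sum_kronecker_mul_mul_conjTranspose_of_eq_smul {R : Type*} [CommSemiring R]
    [StarRing R] {E : ι → Matrix m m R} {F : κ → Matrix n n R} {U : Matrix m m R}
    {V : Matrix n n R} {μ : ι → R} {ν : κ → R} (hE : ∀ a, E a = μ a • U)
    (hF : ∀ b, F b = ν b • V) (hμ : ∑ a, star (μ a) * μ a = 1) (hν : ∑ b, star (ν b) * ν b = 1)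
    (ρ : Matrix (m × n) (m × n) R) :
    ∑ a, ∑ b, (E a ⊗ₖ F b) * ρ * (E a ⊗ₖ F b)ᴴ = (U ⊗ₖ V) * ρ * (U ⊗ₖ V)ᴴ := by
  rw [← Fintype.sum_prod_type']
  refine sum_mul_mul_conjTranspose_of_eq_smul (μ := fun ab => μ ab.1 * ν ab.2) (fun ab => ?_) ?_ ρ
  · simp [hE, hF, smul_kronecker, kronecker_smul, smul_smul, mul_comm]
  · simp_rw [Fintype.sum_prod_type, star_mul', mul_mul_mul_comm _ _ (μ _), ← Finset.mul_sum,
      ← Finset.sum_mul, hμ, hν, mul_one]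

theorem exists_mem_unitaryGroup_of_kraus_eq_smul [DecidableEq n] [Nonempty n]
    {E : ι → Matrix n n ℂ} (hE : ∑ a, (E a)ᴴ * E a = 1) {E₀ : Matrix n n ℂ} {η : ι → ℂ}
    (h : ∀ a, E a = η a • E₀) :
    ∃ U ∈ unitaryGroup n ℂ, ∃ μ : ι → ℂ, (∀ a, E a = μ a • U) ∧ ∑ a, star (μ a) * μ a = 1 := by
  set s : ℝ := ∑ a, Complex.normSq (η a)
  have hstar : ∀ z : ℂ, star z * z = Complex.normSq z := fun _ =>
    Complex.normSq_eq_conj_mul_self.symm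
  have hs : (s : ℂ) • (E₀ᴴ * E₀) = 1 := by
    simp_rw [← hE, h, conjTranspose_smul, Matrix.smul_mul, Matrix.mul_smul, smul_smul,
      ← Finset.sum_smul, hstar, s, Complex.ofReal_sum]
  have hs0 : 0 < s := by
    refine lt_of_le_of_ne (Finset.sum_nonneg fun a _ => Complex.normSq_nonneg _) fun h0 => ?_
    rw [← h0, Complex.ofReal_zero, zero_smul] at hs
    exact zero_ne_one hs
  set r : ℝ := Real.sqrt s
  have hr : (r : ℂ) * r = s := by rw [← Complex.ofReal_mul, Real.mul_self_sqrt hs0.le]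
  have hr0 : (r : ℂ) ≠ 0 := Complex.ofReal_ne_zero.mpr (Real.sqrt_pos.mpr hs0).ne'
  refine ⟨(r : ℂ) • E₀, ?_, fun a => η a / r, fun a => ?_, ?_⟩
  · rw [mem_unitaryGroup_iff', star_eq_conjTranspose, conjTranspose_smul, Matrix.smul_mul,
      Matrix.mul_smul, smul_smul, Complex.star_def, Complex.conj_ofReal, hr, hs]
  · rw [h, smul_smul, div_mul_cancel₀ _ hr0]
  · have hμ : ∀ a, star (η a / r) * (η a / r) = (Complex.normSq (η a) : ℂ) / s := fun a => by
      rw [star_div₀, div_mul_div_comm, hstar, Complex.star_def, Complex.conj_ofReal, hr]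
    simp_rw [hμ, ← Finset.sum_div, ← Complex.ofReal_sum]
    exact div_self (Complex.ofReal_ne_zero.mpr hs0.ne')

theorem exists_ne_zero_forall_mulVec_eq_smul [DecidableEq m] {K : ι → Matrix m m ℂ}
    {ρ : Matrix m m ℂ} (hρ : ρ.PosSemidef) (hρ0 : ρ ≠ 0) {θ : m → ℂ} (hθ : star θ ⬝ᵥ θ = 1)
    (h : ∑ a, K a * ρ * (K a)ᴴ = vecMulVec θ (star θ)) :
    ∃ v ≠ 0, ∃ c : ι → ℂ, ∀ a, K a *ᵥ v = c a • θ := by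
  obtain ⟨G, rfl⟩ : ∃ G, ρ = G * Gᴴ := by
    open scoped MatrixOrder in
    obtain ⟨S, hS⟩ := CStarAlgebra.nonneg_iff_eq_star_mul_self.mp hρ.nonneg
    exact ⟨Sᴴ, by rw [hS, conjTranspose_conjTranspose, star_eq_conjTranspose]⟩
  obtain ⟨x, p, hxp⟩ : ∃ x p, G x p ≠ 0 := by
    by_contra! hG
    exact hρ0 (by rw [show G = 0 from Matrix.ext hG, Matrix.zero_mul])
  refine ⟨fun x => G x p, Function.ne_iff.mpr ⟨x, hxp⟩, fun a => (star θ ᵥ* (K a * G)) p,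
    fun a => funext fun y => ?_⟩
  have hKG := eq_vecMulVec_of_sum_mul_conjTranspose_eq (W := fun a => K a * G) hθ
    (by simpa [conjTranspose_mul, Matrix.mul_assoc] using h) a
  rw [Pi.smul_apply, smul_eq_mul, mul_comm]
  exact congrFun₂ hKG y p

end Kraus

theorem eq_smul_of_mul_eq_smul {K ι n : Type*} [Field K] [Fintype n] [DecidableEq n]
    {E : ι → Matrix n n K} {Y T : Matrix n n K} (hT : IsUnit T) {c : ι → K}
    (h : ∀ a, E a * Y = c a • T) {a₀ : ι} (ha₀ : c a₀ ≠ 0) (a : ι) :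
    E a = (c a / c a₀) • E a₀ := by
  have hY : IsUnit Y := by
    have hEY : IsUnit (E a₀ * Y) := h a₀ ▸ hT.smul (Units.mk0 _ ha₀)
    rw [isUnit_iff_isUnit_det, det_mul] at hEY
    exact (isUnit_iff_isUnit_det _).mpr (isUnit_of_mul_isUnit_right hEY)
  apply hY.mul_right_cancel
  rw [h a, Matrix.smul_mul, h a₀, smul_smul, div_mul_cancel₀ _ ha₀]

/-- `vec Xᵀ` is the row-major vectorisation: `vec Xᵀ (i, j) = X i j`. -/
theorem forall_eq_smul_of_kronecker_mulVec_eq_smul {K ι κ n : Type*} [Field K] [Fintype n]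
    [DecidableEq n] {E : ι → Matrix n n K} {F : κ → Matrix n n K} {X T : Matrix n n K}
    (hT : IsUnit T) {c : ι → κ → K} (h : ∀ a b, (E a ⊗ₖ F b) *ᵥ vec Xᵀ = c a b • vec Tᵀ)
    {a₀ : ι} {b₀ : κ} (hc : c a₀ b₀ ≠ 0) :
    (∀ a, E a = (c a b₀ / c a₀ b₀) • E a₀) ∧ ∀ b, F b = (c a₀ b / c a₀ b₀) • F b₀ := by
  have h' : ∀ a b, E a * X * (F b)ᵀ = c a b • T := fun a b => by
    rw [← transpose_inj, ← vec_inj, transpose_mul, transpose_mul, transpose_transpose,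
      ← Matrix.mul_assoc, ← kronecker_mulVec_vec, h, transpose_smul, vec_smul]
  constructor
  · exact eq_smul_of_mul_eq_smul (Y := X * (F b₀)ᵀ) hT
      (fun a => by rw [← Matrix.mul_assoc, h']) hc
  · refine eq_smul_of_mul_eq_smul (Y := (E a₀ * X)ᵀ) ((isUnit_transpose T).mpr hT)
      (fun b => ?_) hc
    rw [← transpose_transpose (F b), ← transpose_mul, h', transpose_smul]

theorem stmt_11_general (d : ℕ) (N N' : ℕ)
    (E : Fin N → Matrix (Fin (d ^ 2)) (Fin (d ^ 2)) ℂ)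
    (F : Fin N' → Matrix (Fin (d ^ 2)) (Fin (d ^ 2)) ℂ)
    (hE : ∑ a : Fin N, (E a)ᴴ * E a = 1)
    (hF : ∑ b : Fin N', (F b)ᴴ * F b = 1)
    (ρ : Matrix (Fin (d ^ 2) × Fin (d ^ 2)) (Fin (d ^ 2) × Fin (d ^ 2)) ℂ)
    (hρ : ρ.PosSemidef) (hρtr : ρ.trace = 1)
    (lam : Fin (d ^ 2) → ℝ) (hlam : ∀ k, 0 < lam k)
    (α β : Fin (d ^ 2) → Fin (d ^ 2) → ℂ)
    (hα : OrthonormalFamily (d ^ 2) α) (hβ : OrthonormalFamily (d ^ 2) β)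
    (Θ : Fin (d ^ 2) × Fin (d ^ 2) → ℂ)
    (hΘ : ∀ (i j : Fin (d ^ 2)),
      Θ (i, j) = ∑ k : Fin (d ^ 2), (Real.sqrt (lam k) : ℂ) * α k i * β k j)
    (hmap : ∑ a : Fin N, ∑ b : Fin N',
        (E a ⊗ₖ F b) * ρ * (E a ⊗ₖ F b)ᴴ = Matrix.of fun x y => Θ x * star (Θ y)) :
    ∃ (φ : Fin (d ^ 2) × Fin (d ^ 2) → ℂ) (A B : Fin (d ^ 2) → Fin (d ^ 2) → ℂ),
      OrthonormalFamily (d ^ 2) A ∧ OrthonormalFamily (d ^ 2) B ∧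
      (∑ x, Complex.normSq (φ x) = 1) ∧
      ρ = Matrix.of (fun x y => φ x * star (φ y)) ∧
      ∀ (i j : Fin (d ^ 2)),
        φ (i, j) = ∑ k : Fin (d ^ 2), (Real.sqrt (lam k) : ℂ) * A k i * B k j := by
  have hK := sum_conjTranspose_kronecker_mul_kronecker hE hF
  have hKρ : ∑ ab : Fin N × Fin N', (E ab.1 ⊗ₖ F ab.2) * ρ * (E ab.1 ⊗ₖ F ab.2)ᴴ =
      vecMulVec Θ (star Θ) := (Fintype.sum_prod_type _).trans hmap
  have hΘ1 : star Θ ⬝ᵥ Θ = 1 := by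
    rw [dotProduct_comm, ← trace_vecMulVec, ← hKρ, trace_sum_mul_mul_conjTranspose hK, hρtr]
  obtain ⟨v, hv, c, hc⟩ := exists_ne_zero_forall_mulVec_eq_smul hρ
    (by rintro rfl; simp at hρtr) hΘ1 hKρ
  obtain ⟨⟨a₀, b₀⟩, h₀⟩ := exists_mulVec_ne_zero hK hv
  have hT : IsUnit (of fun i j => Θ (i, j)) := by
    simpa only [hΘ] using isUnit_sum_mul_of_orthonormalFamily hα hβ
      fun k => Complex.ofReal_ne_zero.mpr (Real.sqrt_pos.mpr (hlam k)).ne'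
  obtain ⟨hEprop, hFprop⟩ := forall_eq_smul_of_kronecker_mulVec_eq_smul
    (X := of fun i j => v (i, j)) hT (c := fun a b => c (a, b)) (fun a b => hc (a, b))
    (a₀ := a₀) (b₀ := b₀) fun h => h₀ (by rw [hc, h, zero_smul])
  have : Nonempty (Fin (d ^ 2)) := ⟨(Function.ne_iff.mp hv).choose.1⟩
  obtain ⟨U, hU, μ, hEU, hμ⟩ := exists_mem_unitaryGroup_of_kraus_eq_smul hE hEprop
  obtain ⟨V, hV, ν, hFV, hν⟩ := exists_mem_unitaryGroup_of_kraus_eq_smul hF hFprop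
  have hρφ := eq_vecMulVec_of_mul_mul_conjTranspose_eq (kronecker_mem_unitary hU hV)
    ((sum_kronecker_mul_mul_conjTranspose_of_eq_smul hEU hFV hμ hν ρ).symm.trans hmap)
  rw [conjTranspose_kronecker] at hρφ
  refine ⟨_, _, _, hα.mulVec (Unitary.star_mem hU), hβ.mulVec (Unitary.star_mem hV), ?_, hρφ,
    kronecker_mulVec_apply_of_eq_sum _ _ hΘ⟩
  rw [hρφ, trace_vecMulVec_star] at hρtr
  exact_mod_cast hρtr

theorem stmt_11 (d : ℕ) (hd : 1 ≤ d) (N N' : ℕ)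
    (E : Fin N → Matrix (Fin (d ^ 2)) (Fin (d ^ 2)) ℂ)
    (F : Fin N' → Matrix (Fin (d ^ 2)) (Fin (d ^ 2)) ℂ)
    (hE : ∑ a : Fin N, (E a)ᴴ * E a = 1)
    (hF : ∑ b : Fin N', (F b)ᴴ * F b = 1)
    (ρ : Matrix (Fin (d ^ 2) × Fin (d ^ 2)) (Fin (d ^ 2) × Fin (d ^ 2)) ℂ)
    (hρ : ρ.PosSemidef) (hρtr : ρ.trace = 1)
    (lam : Fin (d ^ 2) → ℝ) (hlam : ∀ k, 0 < lam k) (hlamsum : ∑ k, lam k = 1)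
    (α β : Fin (d ^ 2) → Fin (d ^ 2) → ℂ)
    (hα : OrthonormalFamily (d ^ 2) α) (hβ : OrthonormalFamily (d ^ 2) β)
    (Θ : Fin (d ^ 2) × Fin (d ^ 2) → ℂ)
    (hΘ : ∀ (i j : Fin (d ^ 2)),
      Θ (i, j) = ∑ k : Fin (d ^ 2), (Real.sqrt (lam k) : ℂ) * α k i * β k j)
    (hmap : ∑ a : Fin N, ∑ b : Fin N',
        (E a ⊗ₖ F b) * ρ * (E a ⊗ₖ F b)ᴴ = Matrix.of fun x y => Θ x * star (Θ y)) :
    ∃ (φ : Fin (d ^ 2) × Fin (d ^ 2) → ℂ) (A B : Fin (d ^ 2) → Fin (d ^ 2) → ℂ),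
      OrthonormalFamily (d ^ 2) A ∧ OrthonormalFamily (d ^ 2) B ∧
      (∑ x, Complex.normSq (φ x) = 1) ∧
      ρ = Matrix.of (fun x y => φ x * star (φ y)) ∧
      ∀ (i j : Fin (d ^ 2)),
        φ (i, j) = ∑ k : Fin (d ^ 2), (Real.sqrt (lam k) : ℂ) * A k i * B k j :=
  stmt_11_general d N N' E F hE hF ρ hρ hρtr lam hlam α β hα hβ Θ hΘ hmap

end
end
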